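/- k-balanced reachability reduces to balanced reachability: given a directed graph G = (V,E), vertices s, t, and a nonnegative integer k, construct G'' by adding a new vertex t' and a directed path of k new edges from t' to t through new vertices. Then there is a k-balanced walk from s to t in G if and only if there is a balanced walk from s to t' in G''. -/

import Mathlib

variable {V : Type*}

open Classical in
/-- The balance (number of forward edges minus number of backward edges) of a walk,
given as its list of vertices, in the underlying undirected graph of the digraph `E`. -/
noncomputable def bal (E : V → V → Prop) : List V → ℤ
  | u :: v :: r =>
      (if E u v ∧ ¬ E v u then 1 else if E v u ∧ ¬ E u v then -1 else 0) + bal E (v :: r)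
  | _ => 0

/-- `p` is a walk from `s` to `t` in the underlying undirected graph of the digraph `E`. -/
def IsWalk (E : V → V → Prop) (s t : V) (p : List V) : Prop :=
  p.head? = some s ∧ p.getLast? = some t ∧ p.Chain' (fun u v => E u v ∨ E v u)

/-- The graph `G''`: `G` together with a directed path of `k` new edges from the new
vertex `t' = w₀` through new vertices `w₁, …, w_{k-1}` to `t` (`w_k = t`). -/
def extGraph (E : V → V → Prop) (t : V) (k : ℕ) : (V ⊕ Fin k) → (V ⊕ Fin k) → Prop :=
  fun a b =>
    match a, b with
    | Sum.inl u, Sum.inl v => E u v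
    | Sum.inr i, Sum.inr j => (j : ℕ) = (i : ℕ) + 1
    | Sum.inr i, Sum.inl v => (i : ℕ) + 1 = k ∧ v = t
    | Sum.inl _, Sum.inr _ => False

/-- The new vertex `t' = w₀` (when `k = 0`, `t' = t` itself). -/
def extStart {V : Type*} (t : V) (k : ℕ) : V ⊕ Fin k :=
  if h : 0 < k then Sum.inr ⟨0, h⟩ else Sum.inl t

/-!
Collapse the new path onto `t`, and put the new vertex `w_i` at level `i` and every old vertex at
level `k`. Each edge of the new path raises the level by one, so the balance of a walk in `G''` is
the balance of its collapse in `G` plus the change of level between its ends, which is `-k` for a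
walk from `s` to `t'`. The collapse of a walk is a walk once repetitions of `t` are removed, and
conversely a walk to `t` extends to `t'` by running down the new path.
-/

section Walks

variable {W : Type*} {E : V → V → Prop}

lemma bal_cons_cons (u v : V) (r : List V) :
    bal E (u :: v :: r) = bal E [u, v] + bal E (v :: r) := by
  simp [bal]

lemma bal_pair_self (u : V) : bal E [u, u] = 0 := by
  simp [bal]

lemma bal_replicate (n : ℕ) (v : V) : bal E (List.replicate n v) = 0 := by
  induction n with
  | zero => rfl
  | succ n ih =>
    cases n with
    | zero => rfl
    | succ n => rw [List.replicate_succ, List.replicate_succ, bal_cons_cons, bal_pair_self,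
        ← List.replicate_succ, ih, add_zero]

lemma bal_append {p r : List V} (h : p.getLast? = r.head?) :
    bal E (p ++ r.tail) = bal E p + bal E r := by
  induction p with
  | nil => cases r <;> simp_all [bal]
  | cons u p ih =>
    cases p with
    | nil => cases r <;> simp_all [bal]
    | cons v p =>
      rw [List.getLast?_cons_cons] at h
      rw [List.cons_append, List.cons_append, bal_cons_cons, ← List.cons_append, ih h,
        bal_cons_cons u v p, add_assoc]

lemma isWalk_iff {a b : V} {p : List V} : IsWalk E a b p ↔
    p.head? = some a ∧ p.getLast? = some b ∧ p.IsChain (fun u v => E u v ∨ E v u) :=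
  Iff.rfl

lemma IsWalk.head? {a b : V} {p : List V} (h : IsWalk E a b p) : p.head? = some a := h.1

lemma IsWalk.getLast? {a b : V} {p : List V} (h : IsWalk E a b p) : p.getLast? = some b := h.2.1

lemma isWalk_singleton {a b x : V} : IsWalk E a b [x] ↔ x = a ∧ x = b := by
  simp [isWalk_iff, eq_comm]

lemma isWalk_cons_cons {a b u v : V} {r : List V} :
    IsWalk E a b (u :: v :: r) ↔ u = a ∧ (E u v ∨ E v u) ∧ IsWalk E v b (v :: r) := by
  simp [isWalk_iff, List.getLast?_cons_cons]
  tauto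

lemma IsWalk.append {a b c : V} {p r : List V} (hp : IsWalk E a b p) (hr : IsWalk E b c r) :
    IsWalk E a c (p ++ r.tail) := by
  obtain ⟨hph, hpl, hpc⟩ := isWalk_iff.1 hp
  obtain ⟨r', rfl⟩ : ∃ r', r = b :: r' := by
    rcases r with _ | ⟨x, r'⟩ <;> simp_all [isWalk_iff]
  obtain ⟨-, hrl, hrc⟩ := isWalk_iff.1 hr
  refine isWalk_iff.2 ⟨?_, ?_, List.isChain_append.2 ⟨hpc, hrc.tail, ?_⟩⟩
  · cases p <;> simp_all
  · cases r' <;> simp_all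
  · intro x hx y hy
    simp_all [List.isChain_cons]

lemma IsWalk.map {F : W → W → Prop} {f : W → V} (hf : ∀ a b, F a b → E (f a) (f b))
    {a b : W} {q : List W} (hq : IsWalk F a b q) : IsWalk E (f a) (f b) (q.map f) := by
  obtain ⟨hh, hl, hc⟩ := isWalk_iff.1 hq
  refine isWalk_iff.2 ⟨by simp [hh], by simp [hl], ?_⟩
  exact (List.isChain_map f).2 (hc.imp fun a b h => h.imp (hf a b) (hf b a))

theorem bal_eq_bal_map_add {F : W → W → Prop} (f : W → V) (h : W → ℤ)
    (hstep : ∀ a b, F a b ∨ F b a → bal F [a, b] = bal E [f a, f b] + (h b - h a))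
    {a b : W} {q : List W} (hq : IsWalk F a b q) :
    bal F q = bal E (q.map f) + (h b - h a) := by
  induction q generalizing a with
  | nil => simp [isWalk_iff] at hq
  | cons u q ih =>
    cases q with
    | nil =>
      obtain ⟨rfl, rfl⟩ := isWalk_singleton.1 hq
      simp [bal]
    | cons v q =>
      obtain ⟨rfl, huv, hq⟩ := isWalk_cons_cons.1 hq
      rw [List.map_cons, List.map_cons, bal_cons_cons u v q, bal_cons_cons (f u) (f v),
        hstep u v huv, ih hq, ← List.map_cons]
      ring

theorem exists_isWalk_bal_eq_of_isWalk_reflGen {a b : V} {l : List V}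
    (hl : IsWalk (Relation.ReflGen E) a b l) : ∃ p, IsWalk E a b p ∧ bal E p = bal E l := by
  induction l generalizing a with
  | nil => simp [isWalk_iff] at hl
  | cons u l ih =>
    cases l with
    | nil => exact ⟨[u], isWalk_singleton.2 (isWalk_singleton.1 hl), rfl⟩
    | cons v l =>
      obtain ⟨rfl, huv, hl⟩ := isWalk_cons_cons.1 hl
      obtain ⟨p, hp, hbal⟩ := ih hl
      rw [bal_cons_cons, ← hbal]
      by_cases h : u = v
      · subst h
        exact ⟨p, hp, by rw [bal_pair_self, zero_add]⟩
      · have huv' : E u v ∨ E v u := by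
          simp only [Relation.reflGen_iff] at huv
          grind
        obtain ⟨p, rfl⟩ : ∃ p', p = v :: p' := by
          rcases p with _ | ⟨x, p'⟩ <;> simp_all [isWalk_iff]
        exact ⟨u :: v :: p, isWalk_cons_cons.2 ⟨rfl, huv', hp⟩, bal_cons_cons u v p⟩

end Walks

def collapse (t : V) {k : ℕ} : V ⊕ Fin k → V := Sum.elim id fun _ => t

def level (k : ℕ) : V ⊕ Fin k → ℤ := Sum.elim (fun _ => k) fun i => i

/-- The vertex `w_i` of `G''`, with `w_i = t` for `i ≥ k`. -/
def pathVertex (t : V) (k i : ℕ) : V ⊕ Fin k := if h : i < k then .inr ⟨i, h⟩ else .inl t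

def newPath (t : V) (k : ℕ) : List (V ⊕ Fin k) :=
  (List.range (k + 1)).reverse.map (pathVertex t k)

section ExtGraph

variable {E : V → V → Prop} {t : V} {k : ℕ}

lemma collapse_comp_inl : collapse t ∘ (Sum.inl : V → V ⊕ Fin k) = id := rfl

lemma level_inl (v : V) : level k (.inl v : V ⊕ Fin k) = k := rfl

lemma reflGen_collapse_of_extGraph {a b : V ⊕ Fin k} (h : extGraph E t k a b) :
    Relation.ReflGen E (collapse t a) (collapse t b) := by
  rcases a with u | i <;> rcases b with v | j <;>
    simp_all [extGraph, collapse, Relation.reflGen_iff]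

lemma bal_extGraph_pair {a b : V ⊕ Fin k} (h : extGraph E t k a b ∨ extGraph E t k b a) :
    bal (extGraph E t k) [a, b] =
      bal E [collapse t a, collapse t b] + (level k b - level k a) := by
  rcases a with u | i <;> rcases b with v | j <;> simp [extGraph] at h
  · simp only [collapse, level, Sum.elim_inl, id, sub_self, add_zero]
    rfl
  all_goals
    simp [bal, extGraph, collapse, level, h]
    omega

lemma bal_extGraph_eq {a b : V ⊕ Fin k} {q : List (V ⊕ Fin k)}
    (hq : IsWalk (extGraph E t k) a b q) :
    bal (extGraph E t k) q = bal E (q.map (collapse t)) + (level k b - level k a) :=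
  bal_eq_bal_map_add _ _ (fun _ _ => bal_extGraph_pair) hq

lemma extGraph_pathVertex_succ {m : ℕ} (hm : m < k) :
    extGraph E t k (pathVertex t k m) (pathVertex t k (m + 1)) := by
  unfold pathVertex
  split_ifs <;> simp [extGraph]
  omega

lemma collapse_pathVertex (i : ℕ) : collapse t (pathVertex t k i) = t := by
  unfold pathVertex
  split_ifs <;> rfl

lemma collapse_extStart : collapse t (extStart t k) = t :=
  collapse_pathVertex 0

lemma level_extStart : level k (extStart t k) = 0 := by
  unfold extStart level
  split_ifs <;> simp_all

lemma isWalk_newPath : IsWalk (extGraph E t k) (.inl t) (extStart t k) (newPath t k) := by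
  refine isWalk_iff.2 ⟨?_, ?_, ?_⟩
  · simp [newPath, List.range_succ, pathVertex]
  · simp [newPath, List.range_succ_eq_map]
    rfl
  rw [newPath, List.isChain_map, List.isChain_reverse, List.isChain_range_succ]
  exact fun m hm => .inr (extGraph_pathVertex_succ hm)

lemma bal_newPath : bal (extGraph E t k) (newPath t k) = -k := by
  have hcollapse : (newPath t k).map (collapse t) = List.replicate (k + 1) t := by
    simp [List.eq_replicate_iff, newPath, collapse_pathVertex]
  rw [bal_extGraph_eq isWalk_newPath, hcollapse, bal_replicate, level_extStart, level_inl,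
    zero_add, zero_sub]

end ExtGraph

theorem kBalanced_iff_balanced_ext (E : V → V → Prop) (s t : V) (k : ℕ) :
    (∃ p : List V, IsWalk E s t p ∧ bal E p = (k : ℤ)) ↔
    (∃ p : List (V ⊕ Fin k),
      IsWalk (extGraph E t k) (Sum.inl s) (extStart t k) p ∧ bal (extGraph E t k) p = 0) := by
  constructor
  · rintro ⟨p, hp, hbal⟩
    have hp' : IsWalk (extGraph E t k) (.inl s) (.inl t) (p.map .inl) :=
      hp.map (f := Sum.inl) fun _ _ h => h
    have hnew : IsWalk (extGraph E t k) (.inl t) (extStart t k) (newPath t k) := isWalk_newPath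
    refine ⟨p.map .inl ++ (newPath t k).tail, hp'.append hnew, ?_⟩
    rw [bal_append (hp'.getLast?.trans hnew.head?.symm), bal_extGraph_eq hp', bal_newPath,
      List.map_map, collapse_comp_inl, List.map_id, hbal, level_inl, level_inl]
    ring
  · rintro ⟨q, hq, hbal⟩
    obtain ⟨p, hp, hpbal⟩ :=
      exists_isWalk_bal_eq_of_isWalk_reflGen (hq.map fun _ _ => reflGen_collapse_of_extGraph)
    have hq_bal := bal_extGraph_eq hq
    rw [hbal, level_extStart, level_inl] at hq_bal
    refine ⟨p, by rwa [collapse_extStart] at hp, by linarith⟩
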